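/- For all integers k ≥ 1 and s ≥ 0, the graph G_s consisting of the disjoint union of s+1 copies of the complete graph K_{k+1} (so Δ(G_s) = k) is not equitably DP (k+1)-colorable; that is, there exists a (k+1)-cover H of G_s admitting no (s+1)-bounded H-coloring. In particular, for every positive integer k there are infinitely many graphs with maximum degree at most k that are not EDP (k+1)-colorable. -/
import Mathlib


/-- A DP-cover (correspondence cover) of a graph `G` with colors in `Γ`:
lists `L v`, and a symmetric adjacency relation between nodes `(v, γ)`
that projects to edges of `G` and is a partial matching between fibers. -/
structure DPCover {V : Type*} (G : SimpleGraph V) (Γ : Type*) where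
  L : V → Finset Γ
  Adj : V × Γ → V × Γ → Prop
  symm : ∀ p q, Adj p q → Adj q p
  adj_sub : ∀ u α w β, Adj (u, α) (w, β) → G.Adj u w ∧ α ∈ L u ∧ β ∈ L w
  matching : ∀ u α w β β', Adj (u, α) (w, β) → Adj (u, α) (w, β') → β = β'

/-- `H` is a `k`-cover: every list has size `k`. -/
def DPCover.IsKCover {V Γ : Type*} {G : SimpleGraph V} (H : DPCover G Γ) (k : ℕ) : Prop :=
  ∀ v, (H.L v).card = k

/-- An `H`-coloring: a choice from every list whose graph is independent in the cover. -/
def DPCover.IsColoring {V Γ : Type*} {G : SimpleGraph V} (H : DPCover G Γ) (f : V → Γ) : Prop :=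
  (∀ v, f v ∈ H.L v) ∧ ∀ u w, ¬ H.Adj (u, f u) (w, f w)

/-- The size of the color class of `γ` under `f`. -/
def classSize {V Γ : Type*} [Fintype V] [DecidableEq Γ] (f : V → Γ) (γ : Γ) : ℕ :=
  (Finset.univ.filter fun v => f v = γ).card

/-- Every color class has size at most `m`. -/
def IsBounded {V Γ : Type*} [Fintype V] [DecidableEq Γ] (m : ℕ) (f : V → Γ) : Prop :=
  ∀ γ, classSize f γ ≤ m

/-- `f` is `⌈n/k⌉`-bounded and at most `n % k` color classes have size `⌊n/k⌋ + 1`. -/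
def IsStronglyBounded {V Γ : Type*} [Fintype V] [DecidableEq Γ] (n k : ℕ) (f : V → Γ) : Prop :=
  IsBounded ((n + k - 1) / k) f ∧
  ((Finset.univ.image f).filter fun γ => classSize f γ = n / k + 1).card ≤ n % k

/-- `G` is equitably DP `k`-colorable: every `k`-cover admits a `⌈n/k⌉`-bounded coloring. -/
def EDPColorable {V : Type*} [Fintype V] (G : SimpleGraph V) (k : ℕ) : Prop :=
  ∀ H : DPCover G ℕ, H.IsKCover k →
    ∃ f, H.IsColoring f ∧ IsBounded ((Fintype.card V + k - 1) / k) f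

/-- `G` is strongly equitably DP `k`-colorable: every `k`-cover admits a strongly
`⌈n/k⌉`-bounded coloring. -/
def SEDPColorable {V : Type*} [Fintype V] (G : SimpleGraph V) (k : ℕ) : Prop :=
  ∀ H : DPCover G ℕ, H.IsKCover k →
    ∃ f, H.IsColoring f ∧ IsStronglyBounded (Fintype.card V) k f

/-- The disjoint union of `s + 1` copies of the complete graph `K_{k+1}`:
vertices are pairs `(copy, vertex)`, adjacent iff they lie in the same copy
and differ. -/
def cliqueSum (s k : ℕ) : SimpleGraph (Fin (s + 1) × Fin (k + 1)) :=
  SimpleGraph.fromRel (fun a b => a.1 = b.1)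

private lemma mod_succ_inj {k b b' : ℕ} (hb : b < k + 1) (hb' : b' < k + 1)
    (h : (b + 1) % (k + 1) = (b' + 1) % (k + 1)) : b = b' := by
  rcases Nat.lt_or_ge (b + 1) (k + 1) with h1 | h1
  · rw [Nat.mod_eq_of_lt h1] at h
    rcases Nat.lt_or_ge (b' + 1) (k + 1) with h2 | h2
    · rw [Nat.mod_eq_of_lt h2] at h; omega
    · have e : b' + 1 = k + 1 := by omega
      rw [e, Nat.mod_self] at h; omega
  · have e : b + 1 = k + 1 := by omega
    rw [e, Nat.mod_self] at h
    rcases Nat.lt_or_ge (b' + 1) (k + 1) with h2 | h2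
    · rw [Nat.mod_eq_of_lt h2] at h; omega
    · omega

/-- The bad cover: lists are all `{0,…,k}`; inside copy `0` we use cyclic-shift
matchings (so no coloring of that copy can be injective), and inside every other
copy we use identity matchings (so every coloring of those copies is injective). -/
def badCover (s k : ℕ) : DPCover (cliqueSum s k) ℕ where
  L _ := Finset.range (k + 1)
  Adj p q := p.1.1 = q.1.1 ∧ p.2 < k + 1 ∧ q.2 < k + 1 ∧
    (if p.1.1 = 0 then
      (p.1.2 < q.1.2 ∧ q.2 = (p.2 + 1) % (k + 1)) ∨
      (q.1.2 < p.1.2 ∧ p.2 = (q.2 + 1) % (k + 1))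
    else p.1.2 ≠ q.1.2 ∧ p.2 = q.2)
  symm := by
    rintro ⟨⟨c, i⟩, a⟩ ⟨⟨d, j⟩, b⟩ ⟨h1, h2, h3, h4⟩
    subst h1
    refine ⟨rfl, h3, h2, ?_⟩
    split_ifs at h4 ⊢ with hc
    · tauto
    · exact ⟨Ne.symm h4.1, h4.2.symm⟩
  adj_sub := by
    rintro ⟨c, i⟩ a ⟨d, j⟩ b ⟨h1, h2, h3, h4⟩
    subst h1
    refine ⟨?_, Finset.mem_range.2 h2, Finset.mem_range.2 h3⟩
    rw [cliqueSum, SimpleGraph.fromRel_adj]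
    refine ⟨?_, Or.inl rfl⟩
    have hij : i ≠ j := by
      split_ifs at h4 with hc
      · rcases h4 with ⟨h, _⟩ | ⟨h, _⟩
        · exact ne_of_lt h
        · exact (ne_of_lt h).symm
      · exact h4.1
    intro he
    exact hij (congrArg Prod.snd he)
  matching := by
    rintro ⟨c, i⟩ a ⟨d, j⟩ b b' ⟨h1, h2, h3, h4⟩ ⟨h1', h2', h3', h4'⟩
    subst h1
    split_ifs at h4 h4' with hc
    · rcases h4 with ⟨hij, hb⟩ | ⟨hji, ha⟩ <;> rcases h4' with ⟨hij', hb'⟩ | ⟨hji', ha'⟩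
      · exact hb.trans hb'.symm
      · exact absurd hji' (lt_asymm hij)
      · exact absurd hij' (lt_asymm hji)
      · exact mod_succ_inj h3 h3' (ha.symm.trans ha')
    · exact h4.2.symm.trans h4'.2

/-- For all `k ≥ 1` and `s ≥ 0`, the disjoint union of `s + 1` copies of `K_{k+1}`
(a graph with maximum degree `k`) is not equitably DP `(k+1)`-colorable: some
`(k+1)`-cover admits no `(s+1)`-bounded coloring.  In particular, there are
infinitely many graphs of maximum degree at most `k` that are not EDP
`(k+1)`-colorable. -/
theorem cliqueSum_not_EDP_colorable (k : ℕ) (hk : 1 ≤ k) (s : ℕ) :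
    ¬ EDPColorable (cliqueSum s k) (k + 1) := by
  intro hE
  obtain ⟨f, hf, hb⟩ := hE (badCover s k) (fun v => Finset.card_range _)
  have hlt : ∀ v, f v < k + 1 := fun v => Finset.mem_range.1 (hf.1 v)
  have hnadj := hf.2
  -- injective colorings of a copy are surjective onto {0,…,k}
  have key : ∀ c : Fin (s + 1), Function.Injective (fun i : Fin (k + 1) => f (c, i)) →
      ∀ γ, γ < k + 1 → ∃ i, f (c, i) = γ := by
    intro c hinj γ hγ
    have himg : (Finset.univ.image fun i : Fin (k + 1) => f (c, i)) = Finset.range (k + 1) := by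
      apply Finset.eq_of_subset_of_card_le
      · intro x hx
        simp only [Finset.mem_image, Finset.mem_univ, true_and] at hx
        obtain ⟨i, hi⟩ := hx
        exact Finset.mem_range.2 (hi ▸ hlt (c, i))
      · rw [Finset.card_range, Finset.card_image_of_injective _ hinj]
        simp
    have hmem : γ ∈ (Finset.univ.image fun i : Fin (k + 1) => f (c, i)) := by
      rw [himg]; exact Finset.mem_range.2 hγ
    simpa using hmem
  -- in copies ≠ 0, the coloring is injective
  have hinjc : ∀ c : Fin (s + 1), c ≠ 0 →
      Function.Injective (fun i : Fin (k + 1) => f (c, i)) := by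
    intro c hc i j hij
    by_contra hne
    exact hnadj (c, i) (c, j)
      ⟨rfl, hlt _, hlt _, by rw [if_neg hc]; exact ⟨fun h => hne (by exact h), hij⟩⟩
  -- in copy 0, the coloring is not injective
  have h0 : ¬ Function.Injective (fun i : Fin (k + 1) => f ((0 : Fin (s + 1)), i)) := by
    intro hinj
    obtain ⟨j, hj⟩ := key 0 hinj ((f (0, 0) + 1) % (k + 1)) (Nat.mod_lt _ (by omega))
    have hb0 := hlt ((0 : Fin (s + 1)), (0 : Fin (k + 1)))
    have hj0 : j ≠ 0 := by
      intro h
      subst h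
      rcases Nat.lt_or_ge (f (0, 0) + 1) (k + 1) with h1 | h1
      · rw [Nat.mod_eq_of_lt h1] at hj; omega
      · have e : f ((0 : Fin (s + 1)), (0 : Fin (k + 1))) + 1 = k + 1 := by omega
        rw [e, Nat.mod_self] at hj; omega
    exact hnadj (0, 0) (0, j)
      ⟨rfl, hlt _, hlt _, by rw [if_pos rfl]; exact Or.inl ⟨Fin.pos_of_ne_zero hj0, hj⟩⟩
  obtain ⟨i, j, hfij, hij⟩ := Function.not_injective_iff.1 h0
  set γ0 := f ((0 : Fin (s + 1)), i) with hγ0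
  have hγ0lt : γ0 < k + 1 := hlt _
  -- pick a γ0-colored vertex in every other copy
  have pick : ∀ c : Fin (s + 1), ∃ ic : Fin (k + 1), c ≠ 0 → f (c, ic) = γ0 := by
    intro c
    by_cases hc : c = 0
    · exact ⟨0, fun h => absurd hc h⟩
    · obtain ⟨ic, hic⟩ := key c (hinjc c hc) γ0 hγ0lt
      exact ⟨ic, fun _ => hic⟩
  choose pk hpk using pick
  set A : Finset (Fin (s + 1) × Fin (k + 1)) :=
    (Finset.univ.filter (fun c => c ≠ 0)).image (fun c => (c, pk c)) with hA
  have hsub : insert ((0 : Fin (s + 1)), i) (insert (0, j) A) ⊆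
      Finset.univ.filter (fun v => f v = γ0) := by
    intro v hv
    simp only [Finset.mem_insert, hA, Finset.mem_image, Finset.mem_filter,
      Finset.mem_univ, true_and] at hv ⊢
    rcases hv with rfl | rfl | ⟨c, hc, rfl⟩
    · rfl
    · exact hfij.symm
    · exact hpk c hc
  have hAcard : A.card = s := by
    rw [hA, Finset.card_image_of_injective _ (fun a b hab => congrArg Prod.fst hab),
      Finset.filter_ne', Finset.card_erase_of_mem (Finset.mem_univ _)]
    simp
  have hj_notA : ((0 : Fin (s + 1)), j) ∉ A := by
    rw [hA]
    simp only [Finset.mem_image, Finset.mem_filter, Finset.mem_univ, true_and, not_exists]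
    rintro c ⟨hc, he⟩
    exact hc (congrArg Prod.fst he)
  have hi_not : ((0 : Fin (s + 1)), i) ∉ insert (0, j) A := by
    simp only [Finset.mem_insert, not_or]
    constructor
    · intro h; exact hij (congrArg Prod.snd h)
    · rw [hA]
      simp only [Finset.mem_image, Finset.mem_filter, Finset.mem_univ, true_and, not_exists]
      rintro c ⟨hc, he⟩
      exact hc (congrArg Prod.fst he)
  have hcard : (insert ((0 : Fin (s + 1)), i) (insert (0, j) A)).card = s + 2 := by
    rw [Finset.card_insert_of_notMem hi_not, Finset.card_insert_of_notMem hj_notA, hAcard]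
  have hge : s + 2 ≤ classSize f γ0 := by
    rw [classSize, ← hcard]
    exact Finset.card_le_card hsub
  have hbγ := hb γ0
  have hcardV : Fintype.card (Fin (s + 1) × Fin (k + 1)) = (s + 1) * (k + 1) := by simp
  rw [hcardV] at hbγ
  have hm : ((s + 1) * (k + 1) + (k + 1) - 1) / (k + 1) = s + 1 := by
    have e : ∀ a : ℕ, a + (k + 1) - 1 = k + a := fun a => by omega
    rw [e, Nat.mul_comm, Nat.add_mul_div_left _ _ (Nat.succ_pos k),
      Nat.div_eq_of_lt (by omega)]
    omega
  rw [hm] at hbγ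
  omega
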